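/- arXiv:1308.2459 — 2 statements merged into one kernel-verified Lean document; each statement's English description precedes it below -/
import Mathlib

section
/- Let (X,d) be a metric space, R a finitely semi-recurrent, non-identical relation on X, and T : X → X an R-semi-progressive, R-increasing selfmap which is (d,R;G,(ψ,φ))-contractive for some G ∈ 𝒢 and some pair (ψ,φ) of weak generalized altering functions in F(ℝ₊). If X is (a-o,d)-complete and T is (a-o,d)-continuous, then T is a globally strong Picard operator (modulo (d,R)): for each x ∈ X(T,R) the sequence (Tⁿx) converges to a fixed point of T, and any two fixed points z₁, z₂ of T with z₁ R z₂ coincide. -/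
open Filter Topology

namespace Paper

variable {X : Type*} [MetricSpace X]

/-- `A₁(x,y) = d(x,y)`. -/
noncomputable def A1 (T : X → X) (x y : X) : ℝ := dist x y

/-- `A₂(x,y) = (1/2)[d(x,Tx) + d(y,Ty)]`. -/
noncomputable def A2 (T : X → X) (x y : X) : ℝ := (dist x (T x) + dist y (T y)) / 2

/-- `A₃(x,y) = max{d(x,Tx), d(y,Ty)}`. -/
noncomputable def A3 (T : X → X) (x y : X) : ℝ := max (dist x (T x)) (dist y (T y))

/-- `A₄(x,y) = (1/2)[d(x,Ty) + d(Tx,y)]`. -/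
noncomputable def A4 (T : X → X) (x y : X) : ℝ := (dist x (T y) + dist (T x) y) / 2

/-- `B₁(x,y) = diam{x, Tx, y, Ty}`. -/
noncomputable def B1 (T : X → X) (x y : X) : ℝ := Metric.diam ({x, T x, y, T y} : Set X)

noncomputable def B2 (T : X → X) (x y : X) : ℝ := max (A1 T x y) (A2 T x y)
noncomputable def B3 (T : X → X) (x y : X) : ℝ := max (A1 T x y) (A3 T x y)
noncomputable def B4 (T : X → X) (x y : X) : ℝ := max (A1 T x y) (A4 T x y)
noncomputable def C1 (T : X → X) (x y : X) : ℝ := max (A1 T x y) (max (A2 T x y) (A4 T x y))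
noncomputable def C2 (T : X → X) (x y : X) : ℝ := max (A1 T x y) (max (A3 T x y) (A4 T x y))

/-- The class `𝒢 = {A₁, B₂, B₃, B₄, C₁, C₂}`. -/
noncomputable def calG (T : X → X) : Set (X → X → ℝ) :=
  {A1 T, B2 T, B3 T, B4 T, C1 T, C2 T}

/-- The class `𝒢₁ = {A₁, B₂, B₄, C₁}`. -/
noncomputable def calG1 (T : X → X) : Set (X → X → ℝ) :=
  {A1 T, B2 T, B4 T, C1 T}

/-- `T` is strictly `(d,R;G)`-nonexpansive: `x R̃ y` implies `d(Tx,Ty) < G(x,y)`. -/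
def StrictlyNonexpansive (R : X → X → Prop) (T : X → X) (G : X → X → ℝ) : Prop :=
  ∀ x y, R x y → x ≠ y → dist (T x) (T y) < G x y

/-- `T` is Meir-Keeler `(d,R;G)`-contractive. -/
def MeirKeelerContractive (R : X → X → Prop) (T : X → X) (G : X → X → ℝ) : Prop :=
  StrictlyNonexpansive R T G ∧
  ∀ ε : ℝ, 0 < ε → ∃ δ : ℝ, 0 < δ ∧
    ∀ x y, R x y → x ≠ y → ε < G x y → G x y < ε + δ → dist (T x) (T y) ≤ ε

/-- `φ ∈ F(re)(ℝ₊)`: `φ : ℝ₊ → ℝ₊` with `φ(0) = 0` and `φ(t) < t` for `t > 0`. -/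
def Regressive (φ : ℝ → ℝ) : Prop :=
  φ 0 = 0 ∧ (∀ t, 0 ≤ t → 0 ≤ φ t) ∧ (∀ t, 0 < t → φ t < t)

/-- `φ` is Meir-Keeler admissible. -/
def MKAdmissible (φ : ℝ → ℝ) : Prop :=
  ∀ γ : ℝ, 0 < γ → ∃ β : ℝ, 0 < β ∧ β < γ ∧ ∀ t, γ ≤ t → t < γ + β → φ t ≤ γ

/-- `T` is `(d,R;G,φ)`-contractive. -/
def PhiContractive (R : X → X → Prop) (T : X → X) (G : X → X → ℝ) (φ : ℝ → ℝ) : Prop :=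
  ∀ x y, R x y → x ≠ y → dist (T x) (T y) ≤ φ (G x y)

/-- `(ψ,φ)` is a pair of weak generalized altering functions in `F(ℝ₊)`. -/
def WeakAlteringPair (ψ φ : ℝ → ℝ) : Prop :=
  (∀ s t, 0 ≤ s → s ≤ t → ψ s ≤ ψ t) ∧
  (∀ t, 0 ≤ t → 0 ≤ ψ t) ∧ (∀ t, 0 ≤ t → 0 ≤ φ t) ∧
  φ 0 = 0 ∧
  (∀ ε : ℝ, 0 < ε → ψ ε - Function.leftLim ψ ε < φ ε) ∧
  (∀ ε : ℝ, 0 < ε → ∀ t : ℕ → ℝ,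
    Tendsto t atTop (nhds ε) → (∀ᶠ n in atTop, ε < t n) →
    Function.rightLim ψ ε - ψ ε < Filter.limsup (fun n => φ (t n)) atTop)

/-- `T` is `(d,R;G,(ψ,φ))`-contractive. -/
def PsiPhiContractive (R : X → X → Prop) (T : X → X) (G : X → X → ℝ) (ψ φ : ℝ → ℝ) : Prop :=
  ∀ x y, R x y → x ≠ y → ψ (dist (T x) (T y)) ≤ ψ (G x y) - φ (G x y)

/-- `(z_n)` is `R`-ascending. -/
def Ascending (R : X → X → Prop) (z : ℕ → X) : Prop := ∀ n, R (z n) (z (n + 1))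

/-- `(z_n)` is `T`-orbital: a subsequence of `(Tⁿ x)` for some `x`. -/
def Orbital (T : X → X) (z : ℕ → X) : Prop :=
  ∃ x : X, ∃ i : ℕ → ℕ, Tendsto i atTop atTop ∧ ∀ n, z n = T^[i n] x

/-- `X` is `(a-o,d)`-complete. -/
def AOComplete (R : X → X → Prop) (T : X → X) : Prop :=
  ∀ z : ℕ → X, Ascending R z → Orbital T z → CauchySeq z → ∃ l, Tendsto z atTop (nhds l)

/-- `T` is `(a-o,d)`-continuous. -/
def AOContinuous (R : X → X → Prop) (T : X → X) : Prop :=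
  ∀ z : ℕ → X, ∀ l : X, Ascending R z → Orbital T z → Tendsto z atTop (nhds l) →
    Tendsto (fun n => T (z n)) atTop (nhds (T l))

/-- `R` is `(a-o,d)`-almost-selfclosed. -/
def AlmostSelfClosed (R : X → X → Prop) (T : X → X) : Prop :=
  ∀ z : ℕ → X, ∀ l : X, Ascending R z → Orbital T z → Tendsto z atTop (nhds l) →
    ∃ i : ℕ → ℕ, Tendsto i atTop atTop ∧ ∀ n, R (z (i n)) l

/-- the spectrum `spec(x) = {i ≥ 1 : x R Tⁱx}`. -/
def spec (R : X → X → Prop) (T : X → X) (x : X) : Set ℕ := {i | 1 ≤ i ∧ R x (T^[i] x)}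

/-- `R` is `k`-semi-recurrent at `x`. -/
def SemiRecurrentAt (R : X → X → Prop) (T : X → X) (x : X) (k : ℕ) : Prop :=
  ∀ n : ℕ, 1 ≤ n → ∃ q ∈ spec R T x, q ≤ n ∧ n < q + k

/-- `x` is orbital admissible. -/
def OrbAdmissible (T : X → X) (x : X) : Prop :=
  ∀ i j : ℕ, i ≠ j → T^[i] x ≠ T^[j] x

/-- `R` is finitely semi-recurrent. -/
def FinSemiRecurrent (R : X → X → Prop) (T : X → X) : Prop :=
  ∀ x : X, R x (T x) → OrbAdmissible T x → ∃ k : ℕ, 1 ≤ k ∧ SemiRecurrentAt R T x k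

end Paper

/-!
A `(ψ, φ)`-contraction is a Meir–Keeler contraction: if no `δ` made `ε < G(x, y) < ε + δ` force
`d(Tx, Ty) ≤ ε`, then along the offending values `t n ↓ ε` one would get
`φ (t n) ≤ ψ (t n) - ψ (ε + 0) → 0`, against the jump condition on `ψ` at `ε + 0`.

Let `x R Tx` have no fixed point on its orbit. Since `G(y, Ty) ≤ max (d(y, Ty), d(Ty, T²y))` on `𝒢`,
the steps `d(Tⁿx, Tⁿ⁺¹x)` decrease strictly to `0`; hence `x` is orbital admissible and `R` is
`k`-semi-recurrent at `x`. Every gap `j` contains an index `q ≤ j < q + k` with `Tᵐx R Tᵐ⁺ᵠx`, where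
the Meir–Keeler condition applies again; together with at most `k` short steps this bounds
`d(Tᵐx, Tᵐ⁺ʲx)` uniformly in `j`, so the orbit is Cauchy, and completeness and continuity give the
fixed point. Two `R`-related fixed points satisfy `G(z₁, z₂) = d(z₁, z₂)`, and `φ > 0` on `(0, ∞)`
forces them to coincide.
-/

-- Mathlib's one-sided limits are developed for functions monotone on the whole line, so `f` is
-- extended by the constant `f a` to the left of `a`.
namespace MonotoneOn

variable {f : ℝ → ℝ} {a x : ℝ}

theorem monotone_comp_max (hf : MonotoneOn f (Set.Ici a)) : Monotone fun s => f (max s a) :=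
  fun _ _ hst => hf (le_max_right _ a) (le_max_right _ a) (max_le_max hst le_rfl)

theorem eventuallyEq_comp_max (hx : a < x) : (fun s => f (max s a)) =ᶠ[𝓝 x] f := by
  filter_upwards [Ioi_mem_nhds hx] with s hs
  rw [max_eq_left hs.le]

theorem leftLim_eq_comp_max (hf : MonotoneOn f (Set.Ici a)) (hx : a < x) :
    Function.leftLim f x = Function.leftLim (fun s => f (max s a)) x :=
  leftLim_eq_of_tendsto ((hf.monotone_comp_max.tendsto_leftLim x).congr'
    (nhdsWithin_le_nhds (eventuallyEq_comp_max hx)))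

theorem leftLim_le_of_Ici (hf : MonotoneOn f (Set.Ici a)) (hx : a < x) :
    Function.leftLim f x ≤ f x := by
  rw [hf.leftLim_eq_comp_max hx]
  simpa [max_eq_left hx.le] using hf.monotone_comp_max.leftLim_le (le_refl x)

theorem rightLim_eq_comp_max (hf : MonotoneOn f (Set.Ici a)) (hx : a < x) :
    Function.rightLim f x = Function.rightLim (fun s => f (max s a)) x :=
  rightLim_eq_of_tendsto ((hf.monotone_comp_max.tendsto_rightLim x).congr'
    (nhdsWithin_le_nhds (eventuallyEq_comp_max hx)))

theorem tendsto_rightLim_of_Ici (hf : MonotoneOn f (Set.Ici a)) (hx : a < x) :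
    Tendsto f (𝓝[>] x) (𝓝 (Function.rightLim f x)) := by
  rw [hf.rightLim_eq_comp_max hx]
  exact (hf.monotone_comp_max.tendsto_rightLim x).congr'
    (nhdsWithin_le_nhds (eventuallyEq_comp_max hx))

theorem le_rightLim_of_Ici (hf : MonotoneOn f (Set.Ici a)) (hx : a < x) :
    f x ≤ Function.rightLim f x := by
  rw [hf.rightLim_eq_comp_max hx]
  simpa [max_eq_left hx.le] using hf.monotone_comp_max.le_rightLim (le_refl x)

theorem rightLim_le_of_Ici (hf : MonotoneOn f (Set.Ici a)) (hx : a < x) {y : ℝ} (hxy : x < y) :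
    Function.rightLim f x ≤ f y := by
  rw [hf.rightLim_eq_comp_max hx]
  simpa [max_eq_left (hx.trans hxy).le] using hf.monotone_comp_max.rightLim_le hxy

end MonotoneOn

theorem dist_le_mul_of_forall_dist_succ_le {X : Type*} [PseudoMetricSpace X] {w : ℕ → X}
    {N : ℕ} {β : ℝ} (hβ : ∀ n, N ≤ n → dist (w n) (w (n + 1)) ≤ β) {a b : ℕ} (ha : N ≤ a)
    (hab : a ≤ b) : dist (w a) (w b) ≤ (b - a : ℕ) * β := by
  have h := dist_le_Ico_sum_of_dist_le (f := w) (d := fun _ => β) hab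
    fun hk _ => hβ _ (ha.trans hk)
  simpa using h

theorem dist_add_lt_of_meirKeeler_of_semiRecurrent {X : Type*} [PseudoMetricSpace X]
    {w : ℕ → X} {S : Set ℕ} {k N : ℕ} {ε δ β : ℝ} (hε : 0 < ε) (hβ : 0 < β)
    (hkβ : (k + 2) * β ≤ δ / 2) (hN : ∀ n, N ≤ n → dist (w n) (w (n + 1)) < β)
    (hS : ∀ j, 1 ≤ j → ∃ q ∈ S, q ≤ j ∧ j < q + k)
    (hstep : ∀ m, ∀ q ∈ S,
      dist (w m) (w (m + q)) + dist (w m) (w (m + 1)) + dist (w (m + q)) (w (m + q + 1)) <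
        ε + δ → dist (w (m + 1)) (w (m + q + 1)) ≤ ε) :
    ∀ j m, N ≤ m → dist (w m) (w (m + j)) < ε + δ / 2 := by
  have hblock : ∀ a b, N ≤ a → a ≤ b → b ≤ a + k → dist (w a) (w b) ≤ k * β := by
    intro a b ha hab hbk
    refine (dist_le_mul_of_forall_dist_succ_le (fun n hn => (hN n hn).le) ha hab).trans ?_
    gcongr
    omega
  intro j
  induction j with
  | zero => intro m _; simp only [add_zero, dist_self]; nlinarith
  | succ j ih =>
    intro m hm
    have hρm := hN m hm
    obtain rfl | hj := Nat.eq_zero_or_pos j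
    · nlinarith
    -- Jump from `m` to `m + q`, where the contraction applies, then take at most `k` short steps.
    obtain ⟨q, hqS, hqj, hjq⟩ := hS j hj
    have hfar : dist (w m) (w (m + q)) < ε + δ / 2 + k * β :=
      calc dist (w m) (w (m + q)) ≤ dist (w m) (w (m + j)) + dist (w (m + q)) (w (m + j)) :=
            dist_triangle_right _ _ _
        _ < ε + δ / 2 + k * β :=
            add_lt_add_of_lt_of_le (ih m hm) (hblock _ _ (by omega) (by omega) (by omega))
    have hnear : dist (w (m + 1)) (w (m + q + 1)) ≤ ε := by
      refine hstep m q hqS ?_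
      linarith [hN (m + q) (by omega)]
    calc dist (w m) (w (m + (j + 1)))
        ≤ dist (w m) (w (m + 1)) + dist (w (m + 1)) (w (m + q + 1)) +
            dist (w (m + q + 1)) (w (m + (j + 1))) := dist_triangle4 _ _ _ _
      _ < β + ε + k * β :=
          add_lt_add_of_lt_of_le (add_lt_add_of_lt_of_le hρm hnear)
            (hblock _ _ (by omega) (by omega) (by omega))
      _ ≤ ε + δ / 2 := by linarith

theorem cauchySeq_of_meirKeeler_of_semiRecurrent {X : Type*} [PseudoMetricSpace X]
    {w : ℕ → X} {S : Set ℕ} {k : ℕ}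
    (hρ : Tendsto (fun n => dist (w n) (w (n + 1))) atTop (𝓝 0))
    (hS : ∀ j, 1 ≤ j → ∃ q ∈ S, q ≤ j ∧ j < q + k)
    (hmk : ∀ ε > 0, ∃ δ > 0, ∀ m, ∀ q ∈ S,
      dist (w m) (w (m + q)) + dist (w m) (w (m + 1)) + dist (w (m + q)) (w (m + q + 1)) <
        ε + δ → dist (w (m + 1)) (w (m + q + 1)) ≤ ε) :
    CauchySeq w := by
  refine Metric.cauchySeq_iff'.2 fun ε hε => ?_
  obtain ⟨δ, hδ, hstep⟩ := hmk (ε / 2) (half_pos hε)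
  set β := min δ (ε / 2) / (2 * (k + 2))
  have hβ : 0 < β := by positivity
  have hkβ : (k + 2) * β = min δ (ε / 2) / 2 := by simp only [β]; field_simp
  obtain ⟨N, hN⟩ := eventually_atTop.1 (hρ.eventually (Iio_mem_nhds hβ))
  have hbound := dist_add_lt_of_meirKeeler_of_semiRecurrent (half_pos hε) hβ hkβ.le hN hS
    fun m q hq hlt => hstep m q hq (hlt.trans_le (by gcongr; exact min_le_left _ _))
  refine ⟨N, fun n hn => ?_⟩
  have h := hbound (n - N) N le_rfl
  rw [Nat.add_sub_cancel' hn, dist_comm] at h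
  linarith [min_le_right δ (ε / 2)]

theorem tendsto_zero_of_strictAnti_of_meirKeeler {ρ : ℕ → ℝ} (h0 : ∀ n, 0 ≤ ρ n)
    (hρ : StrictAnti ρ) (hmk : ∀ ε > 0, ∃ δ > 0, ∀ n, ρ n < ε + δ → ρ (n + 1) ≤ ε) :
    Tendsto ρ atTop (𝓝 0) := by
  have hbdd : BddBelow (Set.range ρ) := ⟨0, by rintro _ ⟨n, rfl⟩; exact h0 n⟩
  have hlim := tendsto_atTop_ciInf hρ.antitone hbdd
  have hinf : ∀ n, ⨅ i, ρ i < ρ n := fun n => (ciInf_le hbdd (n + 1)).trans_lt (hρ n.lt_succ_self)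
  obtain hzero | hpos := (le_ciInf h0 : 0 ≤ ⨅ i, ρ i).eq_or_lt
  · rwa [← hzero] at hlim
  obtain ⟨δ, hδ, hstep⟩ := hmk _ hpos
  obtain ⟨n, hn⟩ := (hlim.eventually (Iio_mem_nhds (lt_add_of_pos_right _ hδ))).exists
  exact absurd (hstep n hn) (hinf (n + 1)).not_ge

namespace Paper

section Iterate

open Function

variable {α : Type*} {R : α → α → Prop} {T : α → α} {x : α}

theorem rel_iterate_add (hinc : ∀ x y, R x y → R (T x) (T y)) {q : ℕ} (hq : R x (T^[q] x))
    (m : ℕ) : R (T^[m] x) (T^[m + q] x) := by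
  induction m with
  | zero => simpa using hq
  | succ m ih => simpa only [Nat.add_right_comm m 1 q, iterate_succ_apply'] using hinc _ _ ih

theorem ascending_iterate (hinc : ∀ x y, R x y → R (T x) (T y)) (hx : R x (T x)) :
    Ascending R fun n => T^[n] x :=
  rel_iterate_add (q := 1) hinc hx

theorem orbital_iterate (T : α → α) (x : α) : Orbital T fun n => T^[n] x :=
  ⟨x, id, tendsto_id, fun _ => rfl⟩

theorem tendsto_iterate_of_isFixedPt [TopologicalSpace α] {n : ℕ} (hn : IsFixedPt T (T^[n] x)) :
    Tendsto (fun m => T^[m] x) atTop (𝓝 (T^[n] x)) :=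
  tendsto_atTop_of_eventually_const (i₀ := n) fun m hm => by
    rw [← Nat.sub_add_cancel hm, iterate_add_apply, (hn.iterate (m - n)).eq]

end Iterate

section WeakAltering

variable {ψ φ : ℝ → ℝ}

theorem WeakAlteringPair.monotoneOn (h : WeakAlteringPair ψ φ) : MonotoneOn ψ (Set.Ici 0) :=
  fun s hs t _ hst => h.1 s t hs hst

theorem WeakAlteringPair.phi_pos (h : WeakAlteringPair ψ φ) {ε : ℝ} (hε : 0 < ε) : 0 < φ ε := by
  have hψ := h.monotoneOn
  obtain ⟨-, -, -, -, hleft, -⟩ := h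
  linarith [hleft ε hε, hψ.leftLim_le_of_Ici hε]

theorem WeakAlteringPair.exists_meirKeeler_delta (h : WeakAlteringPair ψ φ) {ε : ℝ}
    (hε : 0 < ε) : ∃ δ > 0, ∀ s t, ε < t → t < ε + δ → ψ s ≤ ψ t - φ t → s ≤ ε := by
  have hψ := h.monotoneOn
  obtain ⟨-, -, hφ, -, -, hright⟩ := h
  by_contra! hbad
  choose s t hεt htδ hst hεs using fun n : ℕ => hbad (1 / (n + 1)) Nat.one_div_pos_of_nat
  have ht : Tendsto t atTop (𝓝[>] ε) := by
    refine tendsto_nhdsWithin_iff.2 ⟨?_, Eventually.of_forall hεt⟩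
    refine tendsto_of_tendsto_of_tendsto_of_le_of_le tendsto_const_nhds ?_
      (fun n => (hεt n).le) (fun n => (htδ n).le)
    simpa using tendsto_const_nhds.add (tendsto_one_div_add_atTop_nhds_zero_nat (𝕜 := ℝ))
  have hgap : Tendsto (fun n => ψ (t n) - Function.rightLim ψ ε) atTop (𝓝 0) := by
    simpa using ((hψ.tendsto_rightLim_of_Ici hε).comp ht).sub_const
      (Function.rightLim ψ ε)
  have hφt : ∀ n, φ (t n) ≤ ψ (t n) - Function.rightLim ψ ε := fun n => by
    linarith [hst n, hψ.rightLim_le_of_Ici hε (hεs n)]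
  have hlimsup : limsup (fun n => φ (t n)) atTop ≤ 0 := by
    rw [← hgap.limsup_eq]
    exact limsup_le_limsup (Eventually.of_forall hφt)
      (isCoboundedUnder_le_of_le atTop fun n => hφ _ (hε.trans (hεt n)).le)
      hgap.isBoundedUnder_le
  linarith [hright ε hε t (tendsto_nhds_of_tendsto_nhdsWithin ht) (Eventually.of_forall hεt),
    hψ.le_rightLim_of_Ici hε]

end WeakAltering

variable {X : Type*} [MetricSpace X]

section CalG

variable {T : X → X} {G : X → X → ℝ}

theorem le_of_mem_calG (hG : G ∈ calG T) {x y : X} {c : ℝ} (h₁ : dist x y ≤ c)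
    (h₂ : A2 T x y ≤ c) (h₃ : A3 T x y ≤ c) (h₄ : A4 T x y ≤ c) : G x y ≤ c := by
  simp only [calG, Set.mem_insert_iff, Set.mem_singleton_iff] at hG
  rcases hG with rfl | rfl | rfl | rfl | rfl | rfl <;>
    simp only [A1, B2, B3, B4, C1, C2, max_le_iff] <;> tauto

theorem dist_le_of_mem_calG (hG : G ∈ calG T) (x y : X) : dist x y ≤ G x y := by
  simp only [calG, Set.mem_insert_iff, Set.mem_singleton_iff] at hG
  rcases hG with rfl | rfl | rfl | rfl | rfl | rfl <;>
    simp only [A1, B2, B3, B4, C1, C2, le_max_iff, le_refl, true_or]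

theorem le_dist_add_of_mem_calG (hG : G ∈ calG T) (x y : X) :
    G x y ≤ dist x y + (dist x (T x) + dist y (T y)) := by
  have hxy := dist_nonneg (x := x) (y := y)
  have hx := dist_nonneg (x := x) (y := T x)
  have hy := dist_nonneg (x := y) (y := T y)
  refine le_of_mem_calG hG (by linarith) ?_ ?_ ?_
  · simp only [A2]; linarith
  · exact max_le (by linarith) (by linarith)
  · simp only [A4]; linarith [dist_triangle x y (T y), dist_triangle_left (T x) y x]

theorem le_max_dist_of_mem_calG (hG : G ∈ calG T) (x : X) :
    G x (T x) ≤ max (dist x (T x)) (dist (T x) (T (T x))) := by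
  have ha := le_max_left (dist x (T x)) (dist (T x) (T (T x)))
  have hb := le_max_right (dist x (T x)) (dist (T x) (T (T x)))
  refine le_of_mem_calG hG ha ?_ le_rfl ?_
  · simp only [A2]; linarith
  · simp only [A4, dist_self]; linarith [dist_triangle x (T x) (T (T x))]

theorem eq_dist_of_mem_calG_of_isFixedPt (hG : G ∈ calG T) {x y : X}
    (hx : Function.IsFixedPt T x) (hy : Function.IsFixedPt T y) : G x y = dist x y :=
  le_antisymm (by simpa [hx.eq, hy.eq] using le_dist_add_of_mem_calG hG x y)
    (dist_le_of_mem_calG hG x y)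

end CalG

section Contractive

variable {R : X → X → Prop} {T : X → X} {G : X → X → ℝ}

theorem PsiPhiContractive.meirKeelerContractive {ψ φ : ℝ → ℝ}
    (hG : ∀ x y, dist x y ≤ G x y) (hpair : WeakAlteringPair ψ φ)
    (h : PsiPhiContractive R T G ψ φ) : MeirKeelerContractive R T G := by
  refine ⟨fun x y hxy hne => ?_, fun ε hε => ?_⟩
  · have hG0 : 0 < G x y := (dist_pos.2 hne).trans_le (hG x y)
    by_contra! hle
    have hψ := hpair.monotoneOn (Set.mem_Ici.2 hG0.le) (Set.mem_Ici.2 dist_nonneg) hle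
    linarith [h x y hxy hne, hpair.phi_pos hG0]
  · obtain ⟨δ, hδ, hle⟩ := hpair.exists_meirKeeler_delta hε
    exact ⟨δ, hδ, fun x y hxy hne h₁ h₂ => hle _ _ h₁ h₂ (h x y hxy hne)⟩

theorem MeirKeelerContractive.exists_dist_le (h : MeirKeelerContractive R T G) {ε : ℝ}
    (hε : 0 < ε) :
    ∃ δ > 0, ∀ x y, R x y → x ≠ y → G x y < ε + δ → dist (T x) (T y) ≤ ε := by
  obtain ⟨δ, hδ, hmk⟩ := h.2 ε hε
  refine ⟨δ, hδ, fun x y hxy hne hlt => ?_⟩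
  rcases le_or_gt (G x y) ε with hle | hgt
  · exact (h.1 x y hxy hne).le.trans hle
  · exact hmk x y hxy hne hgt hlt

theorem PsiPhiContractive.eq_of_isFixedPt {ψ φ : ℝ → ℝ} (hG : G ∈ calG T)
    (hpair : WeakAlteringPair ψ φ) (h : PsiPhiContractive R T G ψ φ) {z₁ z₂ : X}
    (h₁ : Function.IsFixedPt T z₁) (h₂ : Function.IsFixedPt T z₂) (hR : R z₁ z₂) : z₁ = z₂ := by
  by_contra hne
  have hψ := h z₁ z₂ hR hne
  rw [h₁.eq, h₂.eq, eq_dist_of_mem_calG_of_isFixedPt hG h₁ h₂] at hψ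
  linarith [hpair.phi_pos (dist_pos.2 hne)]

end Contractive

section Orbit

open Function

variable {R : X → X → Prop} {T : X → X} {G : X → X → ℝ} {x : X}

theorem isFixedPt_of_tendsto_iterate (hcont : AOContinuous R T)
    (hasc : Ascending R fun n => T^[n] x) {l : X}
    (hl : Tendsto (fun n => T^[n] x) atTop (𝓝 l)) : IsFixedPt T l :=
  tendsto_nhds_unique (hcont _ l hasc (orbital_iterate T x) hl) <| by
    simpa only [comp_def, iterate_succ_apply'] using hl.comp (tendsto_add_atTop_nat 1)

theorem orbAdmissible_of_strictAnti (h : StrictAnti fun n => dist (T^[n] x) (T^[n + 1] x)) :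
    OrbAdmissible T x := fun i j hij heq =>
  hij <| h.injective <| by simp only [iterate_succ_apply', heq]

theorem dist_apply_lt_of_mem_calG (hG : G ∈ calG T) (h : StrictlyNonexpansive R T G) {y : X}
    (hR : R y (T y)) (hne : y ≠ T y) : dist (T y) (T (T y)) < dist y (T y) :=
  (lt_max_iff.1 ((h y (T y) hR hne).trans_le (le_max_dist_of_mem_calG hG y))).resolve_right
    (lt_irrefl _)

theorem strictAnti_dist_iterate (hinc : ∀ x y, R x y → R (T x) (T y)) (hG : G ∈ calG T)
    (hmk : MeirKeelerContractive R T G) (hx : R x (T x)) (hfix : ∀ n, ¬IsFixedPt T (T^[n] x)) :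
    StrictAnti fun n => dist (T^[n] x) (T^[n + 1] x) :=
  strictAnti_nat_of_succ_lt fun n => by
    have hR := ascending_iterate hinc hx n
    simp only [iterate_succ_apply'] at hR ⊢
    exact dist_apply_lt_of_mem_calG hG hmk.1 hR fun h => hfix n h.symm

theorem tendsto_dist_iterate_zero (hinc : ∀ x y, R x y → R (T x) (T y)) (hG : G ∈ calG T)
    (hmk : MeirKeelerContractive R T G) (hx : R x (T x)) (hfix : ∀ n, ¬IsFixedPt T (T^[n] x)) :
    Tendsto (fun n => dist (T^[n] x) (T^[n + 1] x)) atTop (𝓝 0) := by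
  refine tendsto_zero_of_strictAnti_of_meirKeeler (fun _ => dist_nonneg)
    (strictAnti_dist_iterate hinc hG hmk hx hfix) fun ε hε => ?_
  obtain ⟨δ, hδ, hle⟩ := hmk.exists_dist_le hε
  refine ⟨δ, hδ, fun n hn => ?_⟩
  have hR := ascending_iterate hinc hx n
  have hdec := strictAnti_dist_iterate hinc hG hmk hx hfix n.lt_succ_self
  have hGn := le_max_dist_of_mem_calG hG (T^[n] x)
  simp only [iterate_succ_apply'] at hR hdec hn hGn ⊢
  exact hle _ _ hR (fun h => hfix n h.symm) (hGn.trans_lt (by rwa [max_eq_left hdec.le]))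

theorem exists_dist_iterate_le (hinc : ∀ x y, R x y → R (T x) (T y)) (hG : G ∈ calG T)
    (hmk : MeirKeelerContractive R T G) (hadm : OrbAdmissible T x) {ε : ℝ} (hε : 0 < ε) :
    ∃ δ > 0, ∀ m, ∀ q ∈ spec R T x,
      dist (T^[m] x) (T^[m + q] x) + dist (T^[m] x) (T^[m + 1] x) +
          dist (T^[m + q] x) (T^[m + q + 1] x) < ε + δ →
        dist (T^[m + 1] x) (T^[m + q + 1] x) ≤ ε := by
  obtain ⟨δ, hδ, hle⟩ := hmk.exists_dist_le hε
  refine ⟨δ, hδ, fun m q hq hlt => ?_⟩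
  have hGm := le_dist_add_of_mem_calG hG (T^[m] x) (T^[m + q] x)
  simp only [iterate_succ_apply'] at hlt ⊢
  exact hle _ _ (rel_iterate_add hinc hq.2 m) (hadm _ _ (by have := hq.1; omega))
    (hGm.trans_lt (by linarith))

theorem exists_isFixedPt_tendsto_iterate (hfsr : FinSemiRecurrent R T)
    (hinc : ∀ x y, R x y → R (T x) (T y)) (hcomp : AOComplete R T) (hG : G ∈ calG T)
    (hmk : MeirKeelerContractive R T G) (hcont : AOContinuous R T) (hx : R x (T x)) :
    ∃ z, IsFixedPt T z ∧ Tendsto (fun n => T^[n] x) atTop (𝓝 z) := by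
  by_cases hfix : ∃ n, IsFixedPt T (T^[n] x)
  · obtain ⟨n, hn⟩ := hfix
    exact ⟨_, hn, tendsto_iterate_of_isFixedPt hn⟩
  rw [not_exists] at hfix
  have hasc := ascending_iterate hinc hx
  have hadm := orbAdmissible_of_strictAnti (strictAnti_dist_iterate hinc hG hmk hx hfix)
  obtain ⟨k, -, hk⟩ := hfsr x hx hadm
  have hcauchy : CauchySeq fun n => T^[n] x :=
    cauchySeq_of_meirKeeler_of_semiRecurrent (tendsto_dist_iterate_zero hinc hG hmk hx hfix) hk
      fun ε hε => exists_dist_iterate_le hinc hG hmk hadm hε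
  obtain ⟨l, hl⟩ := hcomp _ hasc (orbital_iterate T x) hcauchy
  exact ⟨l, isFixedPt_of_tendsto_iterate hcont hasc hl, hl⟩

end Orbit

theorem globally_strong_picard_psiPhi_continuous_general {X : Type*} [MetricSpace X]
    (R : X → X → Prop) (T : X → X)
    (hfsr : FinSemiRecurrent R T)
    (hinc : ∀ x y : X, R x y → R (T x) (T y))
    (hcomp : AOComplete R T)
    (G : X → X → ℝ) (hG : G ∈ calG T)
    (ψ φ : ℝ → ℝ) (hpair : WeakAlteringPair ψ φ)
    (hcontr : PsiPhiContractive R T G ψ φ)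
    (hcont : AOContinuous R T) :
    (∀ x : X, R x (T x) →
      ∃ z : X, T z = z ∧ Tendsto (fun n => T^[n] x) atTop (nhds z)) ∧
    (∀ z₁ z₂ : X, T z₁ = z₁ → T z₂ = z₂ → R z₁ z₂ → z₁ = z₂) := by
  have hmk := hcontr.meirKeelerContractive (dist_le_of_mem_calG hG) hpair
  exact ⟨fun x hx => exists_isFixedPt_tendsto_iterate hfsr hinc hcomp hG hmk hcont hx,
    fun z₁ z₂ h₁ h₂ hR => hcontr.eq_of_isFixedPt hG hpair h₁ h₂ hR⟩

/-- Theorem 5, alternative (k1): `T` `(d,R;G,(ψ,φ))`-contractive for a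
pair of weak generalized altering functions, `X` `(a-o,d)`-complete,
`T` `(a-o,d)`-continuous. -/
theorem globally_strong_picard_psiPhi_continuous {X : Type*} [MetricSpace X]
    (R : X → X → Prop) (T : X → X)
    (hni : ∃ x y : X, R x y ∧ x ≠ y)
    (hfsr : FinSemiRecurrent R T)
    (hsp : ∃ x : X, R x (T x))
    (hinc : ∀ x y : X, R x y → R (T x) (T y))
    (hcomp : AOComplete R T)
    (G : X → X → ℝ) (hG : G ∈ calG T)
    (ψ φ : ℝ → ℝ) (hpair : WeakAlteringPair ψ φ)
    (hcontr : PsiPhiContractive R T G ψ φ)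
    (hcont : AOContinuous R T) :
    (∀ x : X, R x (T x) →
      ∃ z : X, T z = z ∧ Tendsto (fun n => T^[n] x) atTop (nhds z)) ∧
    (∀ z₁ z₂ : X, T z₁ = z₁ → T z₂ = z₂ → R z₁ z₂ → z₁ = z₂) :=
  globally_strong_picard_psiPhi_continuous_general R T hfsr hinc hcomp G hG ψ φ hpair hcontr hcont

end Paper
end

section
/- Let (X,d) be a metric space, R a relation on X, T : X → X an R-increasing map which is Meir-Keeler (d,R;G)-contractive for some G ∈ 𝒢₁ = {A₁,B₂,B₄,C₁}, and let (u_n) be a sequence in X and z ∈ X be such that: u_n R z and u_n ≠ z for all n, u_n → z, Tu_n → z, and d(u_n, Tu_n) → 0. Then z is a fixed point of T (z = Tz). -/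
open Filter Topology

namespace Paper

variable {X : Type*} [MetricSpace X]

/-- limit of an approximating sequence is a fixed point, for `G ∈ 𝒢₁`. -/
theorem fixed_point_of_limit {X : Type*} [MetricSpace X]
    (R : X → X → Prop) (T : X → X)
    (hinc : ∀ x y : X, R x y → R (T x) (T y))
    (G : X → X → ℝ) (hG : G ∈ calG1 T)
    (hMK : MeirKeelerContractive R T G)
    (u : ℕ → X) (z : X)
    (hRu : ∀ n : ℕ, R (u n) z) (hune : ∀ n : ℕ, u n ≠ z)
    (hu : Tendsto u atTop (nhds z))
    (hTu : Tendsto (fun n => T (u n)) atTop (nhds z))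
    (hd : Tendsto (fun n => dist (u n) (T (u n))) atTop (nhds 0)) :
    z = T z := by
  by_contra hne
  set ε := dist z (T z) with hε
  have hεpos : 0 < ε := dist_pos.mpr hne
  -- d(T u_n, T z) < G(u_n, z)
  have hlt : ∀ n, dist (T (u n)) (T z) ≤ G (u n) z := fun n =>
    (hMK.1 (u n) z (hRu n) (hune n)).le
  -- d(T u_n, T z) → ε
  have h1 : Tendsto (fun n => dist (T (u n)) (T z)) atTop (nhds ε) :=
    hTu.dist tendsto_const_nhds
  -- limits of the components
  have hA1 : Tendsto (fun n => A1 T (u n) z) atTop (nhds 0) := by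
    have := hu.dist (tendsto_const_nhds (x := z))
    simpa [A1] using this
  have hA2 : Tendsto (fun n => A2 T (u n) z) atTop (nhds (ε / 2)) := by
    have := (hd.add (tendsto_const_nhds (x := ε))).div_const 2
    simpa [A2] using this
  have hA4 : Tendsto (fun n => A4 T (u n) z) atTop (nhds (ε / 2)) := by
    have h2 : Tendsto (fun n => dist (u n) (T z)) atTop (nhds ε) :=
      hu.dist tendsto_const_nhds
    have h3 : Tendsto (fun n => dist (T (u n)) z) atTop (nhds 0) := by
      have := hTu.dist (tendsto_const_nhds (x := z))
      simpa using this
    have := (h2.add h3).div_const 2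
    simpa [A4] using this
  have hhalf : max (0 : ℝ) (ε / 2) = ε / 2 := max_eq_right (by linarith)
  have key : ∀ L : ℝ, L < ε →
      Tendsto (fun n => G (u n) z) atTop (nhds L) → False := by
    intro L hL hG'
    exact absurd (le_of_tendsto_of_tendsto' h1 hG' hlt) (not_le.mpr hL)
  rcases hG with h | h | h | h
  · exact key 0 hεpos (by subst h; exact hA1)
  · refine key (ε / 2) (by linarith) ?_
    subst h
    have := hA1.max hA2
    simpa [B2, hhalf] using this
  · refine key (ε / 2) (by linarith) ?_
    subst h
    have := hA1.max hA4
    simpa [B4, hhalf] using this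
  · refine key (ε / 2) (by linarith) ?_
    simp only [calG1, Set.mem_insert_iff, Set.mem_singleton_iff] at h
    subst h
    have := hA1.max (hA2.max hA4)
    simpa [C1, hhalf] using this

end Paper
end
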